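/- arXiv:1906.10275 — 6 statements merged into one kernel-verified Lean document; each statement's English description precedes it below -/
import Mathlib

section
/- Let T be a rooted spanning tree of a finite connected graph G, and let (p, c) be a tree edge with p the parent of c. The edge (p, c) is a bridge of G if and only if no non-tree edge of G bypasses it, i.e., there is no non-tree edge (x, y) with x a descendant of c in T and y not a descendant of c in T. -/
/-- `u` is an ancestor of `v` in the spanning tree `T` rooted at `r`:
`u` lies on every path (in particular on the unique path) from `r` to `v`. -/
def SimpleGraph.IsAncestor {V : Type*} (T : SimpleGraph V) (r u v : V) : Prop :=
  ∀ p : T.Walk r v, p.IsPath → u ∈ p.support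

namespace BypassAux

open SimpleGraph Walk

variable {V : Type*} {T : SimpleGraph V} {r p c : V}

lemma path_unique (hT : T.IsTree) {u v : V} {P Q : T.Walk u v} (hP : P.IsPath) (hQ : Q.IsPath) :
    P = Q :=
  ((hT.existsUnique_path u v).unique hP hQ)

lemma anc_iff_mem (hT : T.IsTree) {u v : V} (P : T.Walk r v) (hP : P.IsPath) :
    T.IsAncestor r u v ↔ u ∈ P.support :=
  ⟨fun h => h P hP, fun h Q hQ => by rw [path_unique hT hQ hP]; exact h⟩

lemma anc_self : T.IsAncestor r c c := fun P _ => P.end_mem_support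

/-- If `z` is in both halves of a path split at `x`, then `z = x`. -/
lemma eq_of_mem_both [DecidableEq V] {u v x z : V} (P : T.Walk u v) (hP : P.IsPath)
    (hx : x ∈ P.support) (h1 : z ∈ (P.takeUntil x hx).support)
    (h2 : z ∈ (P.dropUntil x hx).support) : z = x := by
  have hnd : P.support.Nodup := hP.support_nodup
  rw [← P.take_spec hx, Walk.support_append, List.nodup_append] at hnd
  rw [Walk.support_eq_cons (P.dropUntil x hx), List.mem_cons] at h2
  rcases h2 with rfl | h2
  · rfl
  · exact absurd rfl (hnd.2.2 z h1 z h2)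

lemma notD_p (hT : T.IsTree) (hpc : T.Adj p c) (hparent : T.IsAncestor r p c) :
    ¬ T.IsAncestor r c p := by
  classical
  intro h
  obtain ⟨P, hP, -⟩ := hT.existsUnique_path r c
  have hp : p ∈ P.support := hparent P hP
  have hc : c ∈ (P.takeUntil p hp).support := h _ (hP.takeUntil hp)
  have := eq_of_mem_both P hP hp hc (Walk.end_mem_support (P.dropUntil p hp))
  exact hpc.ne this.symm

/-- Crossing a tree edge other than `(p,c)` preserves being a descendant of `c`. -/
lemma step (hT : T.IsTree) (hpc : T.Adj p c) (hparent : T.IsAncestor r p c)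
    {a b : V} (hab : T.Adj a b) (hne : s(a, b) ≠ s(p, c))
    (ha : T.IsAncestor r c a) : T.IsAncestor r c b := by
  classical
  obtain ⟨P, hP, -⟩ := hT.existsUnique_path r a
  have hca : c ∈ P.support := ha P hP
  by_cases hb : b ∈ P.support
  · -- `b` already on the path to `a`
    have hPb : (P.takeUntil b hb).IsPath := hP.takeUntil hb
    rw [anc_iff_mem hT (P.takeUntil b hb) hPb]
    by_contra hcb
    -- then `c` is in the second half, and the second half is the single edge `b-a`
    have hcd : c ∈ (P.dropUntil b hb).support := by
      have h0 := hca
      rw [← P.take_spec hb, Walk.mem_support_append_iff] at h0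
      exact h0.resolve_left hcb
    have hD : (P.dropUntil b hb) = Walk.cons hab.symm Walk.nil :=
      path_unique hT (hP.dropUntil hb) (by simp [Walk.isPath_def, hab.ne'])
    have hsupp : (P.dropUntil b hb).support = [b, a] := by rw [hD]; simp
    have hceqa : c = a := by
      rw [hsupp] at hcd
      simp only [List.mem_cons, List.mem_singleton, List.not_mem_nil, or_false] at hcd
      rcases hcd with h | h
      · exact absurd (show c ∈ (P.takeUntil b hb).support by
          rw [h]; exact Walk.end_mem_support _) hcb
      · exact h
    subst hceqa
    -- now `P : r → c`, with last edge `b — c`; show `p = b`, contradicting `hne`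
    have hpP : p ∈ P.support := hparent P hP
    rw [← P.take_spec hb, Walk.mem_support_append_iff] at hpP
    have hpb : p = b := by
      rcases hpP with h | h
      · -- two paths from `p` to `c`: the single edge, and (tail of Pb from p) + edge `b-c`
        have hW1path : ((P.takeUntil b hb).dropUntil p h).IsPath := hPb.dropUntil h
        have hWconcat : (((P.takeUntil b hb).dropUntil p h).concat hab.symm).IsPath := by
          rw [Walk.isPath_def, Walk.support_concat, List.nodup_append]
          refine ⟨hW1path.support_nodup, by simp, ?_⟩
          intro z hz w hz' hzw
          simp only [List.mem_singleton] at hz'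
          rw [hz'] at hzw
          subst hzw
          exact hcb (Walk.support_dropUntil_subset _ _ hz)
        have heq : ((P.takeUntil b hb).dropUntil p h).concat hab.symm
            = Walk.cons hpc Walk.nil :=
          path_unique hT hWconcat (by simp [Walk.isPath_def, hpc.ne])
        have hlen0 : ((P.takeUntil b hb).dropUntil p h).length = 0 := by
          have h2 := congrArg Walk.length heq
          simpa [Walk.length_concat] using h2
        exact Walk.eq_of_length_eq_zero hlen0
      · rw [hsupp] at h
        simp only [List.mem_cons, List.mem_singleton, List.not_mem_nil, or_false] at h
        rcases h with h | h
        · exact h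
        · exact absurd h hpc.ne
    exact hne (by rw [hpb]; exact Sym2.eq_swap)
  · -- extend the path by the edge `a-b`
    have hQ : (P.concat hab).IsPath := by
      rw [Walk.isPath_def, Walk.support_concat, List.nodup_append]
      refine ⟨hP.support_nodup, by simp, ?_⟩
      intro z hz w hz' hzw
      simp only [List.mem_singleton] at hz'
      rw [hzw, hz'] at hz
      exact hb hz
    rw [anc_iff_mem hT (P.concat hab) hQ, Walk.support_concat]
    exact List.mem_append_left _ hca

/-- A descendant of `c` is reachable from `c` in the tree avoiding the edge `(p,c)`. -/
lemma reach_desc (hT : T.IsTree) (hpc : T.Adj p c) (hparent : T.IsAncestor r p c)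
    {x : V} (hx : T.IsAncestor r c x) : ∃ W : T.Walk c x, s(p, c) ∉ W.edges := by
  classical
  obtain ⟨P, hP, -⟩ := hT.existsUnique_path r x
  have hc : c ∈ P.support := hx P hP
  refine ⟨P.dropUntil c hc, fun he => ?_⟩
  have hpQ : p ∈ (P.dropUntil c hc).support := Walk.fst_mem_support_of_mem_edges _ he
  have hpT : p ∈ (P.takeUntil c hc).support := hparent _ (hP.takeUntil hc)
  exact hpc.ne (eq_of_mem_both P hP hc hpT hpQ)

lemma reach_nondesc (hpc : T.Adj p c) {y : V} (hy : ¬ T.IsAncestor r c y) :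
    ∃ W : T.Walk r y, s(p, c) ∉ W.edges := by
  rw [SimpleGraph.IsAncestor] at hy
  push_neg at hy
  obtain ⟨P, hP, hcP⟩ := hy
  exact ⟨P, fun he => hcP (Walk.snd_mem_support_of_mem_edges _ he)⟩

lemma exists_cross {G' : SimpleGraph V} {u v : V} (D : V → Prop) :
    ∀ (w : G'.Walk u v), D u → ¬ D v → ∃ a b, G'.Adj a b ∧ D a ∧ ¬ D b := by
  intro w
  induction w with
  | nil => intro h h'; exact absurd h h'
  | @cons u x v h q ih =>
    intro hu hv
    by_cases hx : D x
    · exact ih hx hv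
    · exact ⟨u, x, h, hu, hx⟩

end BypassAux

open SimpleGraph Walk BypassAux in
theorem parent_edge_bridge_iff_no_bypass {V : Type*} [Fintype V]
    (G T : SimpleGraph V) (r : V)
    (hG : G.Connected) (hle : T ≤ G) (hT : T.IsTree)
    (p c : V) (hpc : T.Adj p c) (hparent : T.IsAncestor r p c) :
    G.IsBridge s(p, c) ↔
      ¬ ∃ x y : V, G.Adj x y ∧ ¬ T.Adj x y ∧
        T.IsAncestor r c x ∧ ¬ T.IsAncestor r c y := by
  classical
  set G' := G \ SimpleGraph.fromEdgeSet {s(p, c)} with hG'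
  have hG'adj : ∀ {a b : V}, G.Adj a b → s(a, b) ≠ s(p, c) → G'.Adj a b := by
    intro a b hab hne
    rw [hG', sdiff_adj, fromEdgeSet_adj]
    exact ⟨hab, fun h => hne h.1⟩
  -- transfer a T-walk avoiding the edge `(p,c)` to a walk in `G'`
  have htrans : ∀ {u v : V} (W : T.Walk u v), s(p, c) ∉ W.edges → G'.Reachable u v := by
    intro u v W hW
    induction W with
    | nil => exact SimpleGraph.Reachable.refl _
    | @cons a x b h q ih =>
      have h1 : s(p, c) ∉ q.edges := fun hq => hW (List.mem_cons_of_mem _ hq)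
      have h2 : s(a, x) ≠ s(p, c) := fun he => hW (he ▸ List.mem_cons_self)
      exact (SimpleGraph.Adj.reachable (hG'adj (hle h) h2)).trans (ih h1)
  rw [SimpleGraph.isBridge_iff]
  constructor
  · rintro hnr ⟨x, y, hxy, hnT, hx, hy⟩
    apply hnr
    have hxyne : s(x, y) ≠ s(p, c) := by
      intro h
      apply hnT
      rw [Sym2.eq_iff] at h
      rcases h with ⟨rfl, rfl⟩ | ⟨rfl, rfl⟩
      · exact hpc
      · exact hpc.symm
    obtain ⟨Wcx, hWcx⟩ := reach_desc hT hpc hparent hx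
    obtain ⟨Wry, hWry⟩ := reach_nondesc hpc hy
    obtain ⟨Wrp, hWrp⟩ := reach_nondesc hpc (notD_p hT hpc hparent)
    exact ((htrans Wrp hWrp).symm.trans (htrans Wry hWry)).trans
      ((SimpleGraph.Adj.reachable (hG'adj hxy.symm (by rwa [Sym2.eq_swap]))).trans
        (htrans Wcx hWcx).symm)
  · intro hnb
    refine fun (hr : (G \ SimpleGraph.fromEdgeSet {s(p, c)}).Reachable p c) => ?_
    obtain ⟨w⟩ := hr.symm
    obtain ⟨a, b, hab', hDa, hDb⟩ :=
      exists_cross (fun v => T.IsAncestor r c v) w anc_self (notD_p hT hpc hparent)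
    rw [sdiff_adj, fromEdgeSet_adj] at hab'
    obtain ⟨hGab, hnot⟩ := hab'
    have hne : s(a, b) ≠ s(p, c) := fun h => hnot ⟨Set.mem_singleton_iff.2 h, hGab.ne⟩
    by_cases hTab : T.Adj a b
    · exact hDb (step hT hpc hparent hTab hne hDa)
    · exact hnb ⟨a, b, hGab, hTab, hDa, hDb⟩
end

section
/- Let G be a finite connected simple graph, T a DFS spanning tree rooted at r (every non-tree edge joins an ancestor–descendant pair), and let v ≠ r be a vertex with a child c in T. If no non-tree edge joins a descendant of c to a proper ancestor of v, then v is a cut vertex of G. -/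
namespace CutAux

open SimpleGraph

set_option linter.unusedSectionVars false

variable {V : Type*} [DecidableEq V] {T : SimpleGraph V} {r : V}

lemma walk_unique (hT : T.IsTree) {a b : V} {p q : T.Walk a b}
    (hp : p.IsPath) (hq : q.IsPath) : p = q := by
  have := hT.IsAcyclic.path_unique ⟨p, hp⟩ ⟨q, hq⟩
  exact congrArg Subtype.val this

lemma exists_path (hT : T.IsTree) (a b : V) : ∃ p : T.Walk a b, p.IsPath :=
  (hT.existsUnique_path a b).exists

lemma anc_of_mem (hT : T.IsTree) {a b : V} {p : T.Walk r b} (hp : p.IsPath)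
    (ha : a ∈ p.support) : T.IsAncestor r a b := by
  intro q hq
  rw [walk_unique hT hq hp]
  exact ha

lemma anc_refl (a : V) : T.IsAncestor r a a := fun p _ => p.end_mem_support

lemma isPath_concat {a b c : V} {p : T.Walk a b} (hp : p.IsPath) (h : T.Adj b c)
    (hc : c ∉ p.support) : (p.concat h).IsPath := by
  rw [SimpleGraph.Walk.isPath_def, SimpleGraph.Walk.support_concat,
    List.nodup_append]
  refine ⟨hp.support_nodup, List.nodup_singleton c, ?_⟩
  intro x hx y hx'
  rw [List.mem_singleton] at hx'
  subst hx'
  rintro rfl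
  exact hc hx

/-- If the endpoint of a path appears in `takeUntil u`, then it equals `u`. -/
lemma end_eq_of_mem_takeUntil {x u : V} {p : T.Walk r x} (hp : p.IsPath)
    (hu : u ∈ p.support) (hx : x ∈ (p.takeUntil u hu).support) : x = u := by
  by_contra hne
  have hspec := p.take_spec hu
  have hp' : ((p.takeUntil u hu).append (p.dropUntil u hu)).IsPath := by
    rw [hspec]; exact hp
  rw [SimpleGraph.Walk.isPath_def, SimpleGraph.Walk.support_append,
    List.nodup_append] at hp'
  have hxd : x ∈ (p.dropUntil u hu).support := (p.dropUntil u hu).end_mem_support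
  have hxt : x ∈ (p.dropUntil u hu).support.tail := by
    have hcons := (p.dropUntil u hu).support_eq_cons
    rw [hcons, List.mem_cons] at hxd
    rcases hxd with h | h
    · exact absurd h hne
    · exact h
  exact hp'.2.2 x hx x hxt rfl

lemma anc_antisymm (hT : T.IsTree) {a b : V} (hab : T.IsAncestor r a b)
    (hba : T.IsAncestor r b a) : a = b := by
  obtain ⟨p, hp⟩ := exists_path hT r b
  have ha : a ∈ p.support := hab p hp
  have hq : (p.takeUntil a ha).IsPath := hp.takeUntil ha
  have hb : b ∈ (p.takeUntil a ha).support := hba _ hq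
  exact (end_eq_of_mem_takeUntil hp ha hb).symm

lemma anc_trans (hT : T.IsTree) {a b c : V} (hab : T.IsAncestor r a b)
    (hbc : T.IsAncestor r b c) : T.IsAncestor r a c := by
  intro p hp
  have hb : b ∈ p.support := hbc p hp
  have hq : (p.takeUntil b hb).IsPath := hp.takeUntil hb
  have ha : a ∈ (p.takeUntil b hb).support := hab _ hq
  exact p.support_takeUntil_subset hb ha

/-- Two vertices on a path from the root are comparable as ancestors. -/
lemma anc_total (hT : T.IsTree) {x u w : V} {p : T.Walk r x} (hp : p.IsPath)
    (hu : u ∈ p.support) (hw : w ∈ p.support) :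
    T.IsAncestor r u w ∨ T.IsAncestor r w u := by
  by_cases h : u ∈ (p.takeUntil w hw).support
  · exact Or.inl (anc_of_mem hT (hp.takeUntil hw) h)
  · right
    have hspec := p.take_spec hw
    have hps : ((p.takeUntil w hw).append (p.dropUntil w hw)).IsPath := by
      rw [hspec]; exact hp
    have hud : u ∈ (p.dropUntil w hw).support := by
      have hmem : u ∈ ((p.takeUntil w hw).append (p.dropUntil w hw)).support := by
        rw [hspec]; exact hu
      rw [SimpleGraph.Walk.mem_support_append_iff] at hmem
      tauto
    set d := p.dropUntil w hw with hd
    -- the walk from r to u through w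
    have hdq : (d.takeUntil u hud).IsPath := (hp.dropUntil hw).takeUntil hud
    have hq : ((p.takeUntil w hw).append (d.takeUntil u hud)).IsPath := by
      rw [SimpleGraph.Walk.isPath_def, SimpleGraph.Walk.support_append,
        List.nodup_append] at hps ⊢
      refine ⟨hps.1, ?_, ?_⟩
      · rw [SimpleGraph.Walk.isPath_def] at hdq
        exact hdq.tail
      · intro z hz z' hz' hzz
        subst hzz
        have hzt : z ∈ d.support.tail := by
          have hzs : z ∈ (d.takeUntil u hud).support :=
            List.mem_of_mem_tail hz'
          have hzd : z ∈ d.support := d.support_takeUntil_subset hud hzs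
          rw [d.support_eq_cons, List.mem_cons] at hzd
          rcases hzd with h1 | h1
          · subst h1
            -- z = w is the head of the takeUntil walk, can't be in its tail
            have hn : (d.takeUntil u hud).support.Nodup := by
              rw [← SimpleGraph.Walk.isPath_def]; exact hdq
            rw [(d.takeUntil u hud).support_eq_cons, List.nodup_cons] at hn
            exact absurd hz' hn.1
          · exact h1
        exact hps.2.2 z hz z hzt rfl
    have hwmem : w ∈ ((p.takeUntil w hw).append (d.takeUntil u hud)).support := by
      rw [SimpleGraph.Walk.mem_support_append_iff]
      exact Or.inl (p.takeUntil w hw).end_mem_support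
    exact anc_of_mem hT hq hwmem

/-- If `v` is adjacent to `c` and an ancestor of `c`, then any ancestor of `c`
other than `c` itself is an ancestor of `v`. -/
lemma anc_parent (hT : T.IsTree) {v c y : V} (hvc : T.Adj v c)
    (hanc : T.IsAncestor r v c) (hyc : T.IsAncestor r y c) (hne : y ≠ c) :
    T.IsAncestor r y v := by
  obtain ⟨p, hp⟩ := exists_path hT r v
  have hcp : c ∉ p.support := by
    intro hc
    have : c = v := anc_antisymm hT (anc_of_mem hT hp hc) hanc
    exact hvc.ne' this
  have hq : (p.concat hvc).IsPath := isPath_concat hp hvc hcp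
  have hy : y ∈ (p.concat hvc).support := hyc _ hq
  rw [SimpleGraph.Walk.support_concat, List.mem_append,
    List.mem_singleton] at hy
  rcases hy with hy | hy
  · exact anc_of_mem hT hp hy
  · exact absurd hy hne

/-- Uniqueness of the parent: if `v` and `y` are both adjacent ancestors of `c`,
they are equal. -/
lemma parent_unique (hT : T.IsTree) {v c y : V} (hvc : T.Adj v c)
    (hanc : T.IsAncestor r v c) (hyc : T.Adj y c) (hyanc : T.IsAncestor r y c) :
    y = v := by
  obtain ⟨p, hp⟩ := exists_path hT r v
  obtain ⟨q, hq⟩ := exists_path hT r y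
  have hcp : c ∉ p.support := by
    intro hc
    exact hvc.ne' (anc_antisymm hT (anc_of_mem hT hp hc) hanc)
  have hcq : c ∉ q.support := by
    intro hc
    exact hyc.ne' (anc_antisymm hT (anc_of_mem hT hq hc) hyanc)
  have hp' : (p.concat hvc).IsPath := isPath_concat hp hvc hcp
  have hq' : (q.concat hyc).IsPath := isPath_concat hq hyc hcq
  have heq : q.concat hyc = p.concat hvc := walk_unique hT hq' hp'
  have hsup : q.support ++ [c] = p.support ++ [c] := by
    have := congrArg SimpleGraph.Walk.support heq
    rwa [SimpleGraph.Walk.support_concat, SimpleGraph.Walk.support_concat] at this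
  have hsup' : q.support = p.support := List.append_cancel_right hsup
  have h1 : y ∈ p.support := by rw [← hsup']; exact q.end_mem_support
  have h2 : v ∈ q.support := by rw [hsup']; exact p.end_mem_support
  exact anc_antisymm hT (anc_of_mem hT hp h1) (anc_of_mem hT hq h2)

end CutAux

open CutAux SimpleGraph in
theorem cut_vertex_of_no_backedge {V : Type*} [Fintype V]
    (G T : SimpleGraph V) (r : V)
    (hG : G.Connected) (hle : T ≤ G) (hT : T.IsTree)
    (hdfs : ∀ x y : V, G.Adj x y →
      T.IsAncestor r x y ∨ T.IsAncestor r y x)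
    (v c : V) (hvr : v ≠ r) (hchild : T.Adj v c ∧ T.IsAncestor r v c)
    (hno : ¬ ∃ x y : V, G.Adj x y ∧ ¬ T.Adj x y ∧
        T.IsAncestor r c x ∧ T.IsAncestor r y v ∧ y ≠ v) :
    ¬ (G.induce {u : V | u ≠ v}).Connected := by
  classical
  obtain ⟨hvc, hancvc⟩ := hchild
  -- Key step: any G-edge from a descendant of c to a non-descendant goes to v.
  have edge_out : ∀ x y : V, G.Adj x y → T.IsAncestor r c x →
      ¬ T.IsAncestor r c y → y = v := by
    intro x y hxy hcx hcy
    rcases hdfs x y hxy with h | h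
    · exact absurd (anc_trans hT hcx h) hcy
    · -- y is an ancestor of x
      obtain ⟨p, hp⟩ := exists_path hT r x
      have hcp : c ∈ p.support := hcx p hp
      have hyp : y ∈ p.support := h p hp
      have hyc : T.IsAncestor r y c := by
        rcases anc_total hT hp hyp hcp with h' | h'
        · exact h'
        · exact absurd h' hcy
      have hnec : y ≠ c := by
        intro h'
        apply hcy
        rw [h']
        exact anc_refl c
      have hyv : T.IsAncestor r y v := anc_parent hT hvc hancvc hyc hnec
      by_cases hadj : T.Adj x y
      · -- tree edge: y is the parent of x
        by_cases hxc : x = c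
        · subst hxc
          exact parent_unique hT hvc hancvc hadj.symm h
        · -- then c is an ancestor of y, contradiction
          exfalso
          obtain ⟨q, hq⟩ := exists_path hT r y
          have hxq : x ∉ q.support := by
            intro hx
            exact hadj.ne (anc_antisymm hT (anc_of_mem hT hq hx) h)
          have hq' : (q.concat hadj.symm).IsPath := isPath_concat hq hadj.symm hxq
          have heq : p = q.concat hadj.symm := walk_unique hT hp hq'
          have hcq : c ∈ q.support ++ [x] := by
            rw [← SimpleGraph.Walk.support_concat (h := hadj.symm), ← heq]
            exact hcp
          rw [List.mem_append, List.mem_singleton] at hcq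
          rcases hcq with h' | h'
          · exact hcy (anc_of_mem hT hq h')
          · exact hxc h'.symm
      · -- back edge: contradicts hno unless y = v
        by_contra hne
        exact hno ⟨x, y, hxy, hadj, hcx, hyv, hne⟩
  -- Now suppose the induced graph is connected
  intro hconn
  have hcv : c ≠ v := hvc.ne'
  have hrv : r ≠ v := fun h => hvr h.symm
  have hreach := hconn.preconnected ⟨c, hcv⟩ ⟨r, hrv⟩
  obtain ⟨w⟩ := hreach
  -- every vertex reachable from c avoiding v is a descendant of c
  have key : ∀ {a b : {u : V // u ∈ {u : V | u ≠ v}}}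
      (w : (G.induce {u : V | u ≠ v}).Walk a b),
      T.IsAncestor r c a.1 → T.IsAncestor r c b.1 := by
    intro a b w
    induction w with
    | nil => exact id
    | @cons a' b' c' hadj w ih =>
      intro ha
      apply ih
      have hG' : G.Adj a'.1 b'.1 := hadj
      by_contra hb
      exact b'.2 (edge_out a'.1 b'.1 hG' ha hb)
  have hcr : T.IsAncestor r c r := key w (anc_refl c)
  have hcnil : c ∈ (SimpleGraph.Walk.nil : T.Walk r r).support :=
    hcr SimpleGraph.Walk.nil SimpleGraph.Walk.IsPath.nil
  simp only [SimpleGraph.Walk.support_nil, List.mem_singleton] at hcnil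
  rw [hcnil] at hancvc
  -- then v is an ancestor of r, so v = r
  have hvnil : v ∈ (SimpleGraph.Walk.nil : T.Walk r r).support :=
    hancvc SimpleGraph.Walk.nil SimpleGraph.Walk.IsPath.nil
  simp only [SimpleGraph.Walk.support_nil, List.mem_singleton] at hvnil
  exact hvr hvnil
end

section
/- Let G be a finite connected simple graph, T a DFS spanning tree rooted at r, and v ≠ r a vertex. Then v is a cut vertex of G if and only if v has a child c in T such that no non-tree edge joins a descendant of c to a proper ancestor of v. -/
namespace SimpleGraph

set_option linter.unusedSectionVars false

variable {V : Type*} [DecidableEq V] {T : SimpleGraph V} {r : V}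

private lemma concat_isPath {a b w : V} {p : T.Walk a b} {h : T.Adj b w}
    (hp : p.IsPath) (hw : w ∉ p.support) : (p.concat h).IsPath := by
  rw [← Walk.isPath_reverse_iff, Walk.reverse_concat, Walk.cons_isPath_iff]
  exact ⟨hp.reverse, by rwa [Walk.support_reverse, List.mem_reverse]⟩

private lemma mem_support_concat {a b w x : V} (p : T.Walk a b) (h : T.Adj b w) :
    x ∈ (p.concat h).support ↔ x ∈ p.support ∨ x = w := by
  rw [Walk.support_concat, List.mem_append, List.mem_singleton]

private lemma IsTree.path_eq' (hT : T.IsTree) {a b : V} {p q : T.Walk a b}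
    (hp : p.IsPath) (hq : q.IsPath) : p = q :=
  (hT.existsUnique_path a b).unique hp hq

private lemma exists_path' (hT : T.IsTree) (a b : V) : ∃ p : T.Walk a b, p.IsPath :=
  ⟨(hT.existsUnique_path a b).choose, (hT.existsUnique_path a b).choose_spec.1⟩

private lemma anc_of_mem (hT : T.IsTree) {b u : V} {p : T.Walk r b} (hp : p.IsPath)
    (hu : u ∈ p.support) : T.IsAncestor r u b := fun q hq => by
  rwa [hT.path_eq' hq hp]

private lemma anc_refl (u : V) : T.IsAncestor r u u := fun p _ => p.end_mem_support

private lemma anc_root (b : V) : T.IsAncestor r r b := fun p _ => p.start_mem_support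

private lemma anc_trans (hT : T.IsTree) {u v w : V} (h1 : T.IsAncestor r u v)
    (h2 : T.IsAncestor r v w) : T.IsAncestor r u w := by
  intro p hp
  have hv := h2 p hp
  exact p.support_takeUntil_subset hv (h1 (p.takeUntil v hv) (hp.takeUntil hv))

private lemma support_takeUntil_prefix {a b u : V} (p : T.Walk a b) (h : u ∈ p.support) :
    (p.takeUntil u h).support <+: p.support :=
  ⟨(p.dropUntil u h).support.tail, by rw [← Walk.support_append, Walk.take_spec]⟩

private lemma anc_comparable (hT : T.IsTree) {u w b : V} (hu : T.IsAncestor r u b)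
    (hw : T.IsAncestor r w b) : T.IsAncestor r u w ∨ T.IsAncestor r w u := by
  obtain ⟨p, hp⟩ := exists_path' hT r b
  have hu' := hu p hp
  have hw' := hw p hp
  rcases List.prefix_or_prefix_of_prefix (support_takeUntil_prefix p hu')
      (support_takeUntil_prefix p hw') with h | h
  · exact Or.inl (anc_of_mem hT (hp.takeUntil hw') (h.subset (p.takeUntil u hu').end_mem_support))
  · exact Or.inr (anc_of_mem hT (hp.takeUntil hu') (h.subset (p.takeUntil w hw').end_mem_support))

private lemma anc_antisymm (hT : T.IsTree) {u w : V} (h1 : T.IsAncestor r u w)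
    (h2 : T.IsAncestor r w u) : u = w := by
  obtain ⟨p, hp⟩ := exists_path' hT r w
  have hu := h1 p hp
  have hwt : w ∈ (p.takeUntil u hu).support := h2 _ (hp.takeUntil hu)
  by_contra hne
  have hwd : w ∈ (p.dropUntil u hu).support.tail := by
    have h3 : w ∈ (p.dropUntil u hu).support := (p.dropUntil u hu).end_mem_support
    rw [(p.dropUntil u hu).support_eq_cons] at h3
    rcases List.mem_cons.mp h3 with h3 | h3
    · exact absurd h3.symm hne
    · exact h3
  have hnodup := hp.support_nodup
  rw [← Walk.take_spec p hu, Walk.support_append, List.nodup_append] at hnodup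
  exact hnodup.2.2 _ hwt _ hwd rfl

private lemma adj_anc (hT : T.IsTree) {x y : V} (h : T.Adj x y) :
    T.IsAncestor r x y ∨ T.IsAncestor r y x := by
  obtain ⟨p, hp⟩ := exists_path' hT r y
  by_cases hx : x ∈ p.support
  · exact Or.inl (anc_of_mem hT hp hx)
  · right
    have hc : (p.concat h.symm).IsPath := concat_isPath hp hx
    exact anc_of_mem hT hc ((mem_support_concat p h.symm).mpr (Or.inl p.end_mem_support))

private lemma concat_child_isPath (hT : T.IsTree) {v c : V} (h : T.Adj v c)
    (hvc : T.IsAncestor r v c) {p : T.Walk r v} (hp : p.IsPath) : (p.concat h).IsPath := by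
  have hcp : c ∉ p.support := fun hc =>
    h.ne' (anc_antisymm hT (anc_of_mem hT hp hc) hvc)
  exact concat_isPath hp hcp

private lemma anc_child_iff (hT : T.IsTree) {v c y : V} (h : T.Adj v c)
    (hvc : T.IsAncestor r v c) : T.IsAncestor r y c ↔ T.IsAncestor r y v ∨ y = c := by
  obtain ⟨p, hp⟩ := exists_path' hT r v
  have hq := concat_child_isPath hT h hvc hp
  constructor
  · intro hy
    have h1 := hy _ hq
    rcases (mem_support_concat p h).mp h1 with h1 | h1
    · exact Or.inl (anc_of_mem hT hp h1)
    · exact Or.inr h1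
  · rintro (hy | rfl)
    · exact anc_trans hT hy hvc
    · exact anc_refl y

private lemma parent_unique (hT : T.IsTree) {v c y : V} (h : T.Adj v c)
    (hvc : T.IsAncestor r v c) (h' : T.Adj y c) (hyc : T.IsAncestor r y c) : y = v := by
  obtain ⟨p, hp⟩ := exists_path' hT r v
  obtain ⟨q, hq⟩ := exists_path' hT r y
  have h1 := concat_child_isPath hT h hvc hp
  have h2 := concat_child_isPath hT h' hyc hq
  have he := hT.path_eq' h2 h1
  obtain ⟨hv, -⟩ := Walk.concat_inj he
  exact hv

variable {G : SimpleGraph V}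

private lemma closed_step (hT : T.IsTree)
    (hdfs : ∀ x y : V, G.Adj x y → T.IsAncestor r x y ∨ T.IsAncestor r y x)
    {v c : V} (hvc : T.Adj v c) (havc : T.IsAncestor r v c)
    (hnb : ¬ ∃ x y : V, G.Adj x y ∧ ¬ T.Adj x y ∧
      T.IsAncestor r c x ∧ T.IsAncestor r y v ∧ y ≠ v)
    {x y : V} (hxy : G.Adj x y) (hx : T.IsAncestor r c x) (hyv : y ≠ v) :
    T.IsAncestor r c y := by
  by_contra hcy
  have hyx : T.IsAncestor r y x := by
    rcases hdfs x y hxy with h | h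
    · exact absurd (anc_trans hT hx h) hcy
    · exact h
  have hyc : T.IsAncestor r y c := by
    rcases anc_comparable hT hx hyx with h | h
    · exact absurd h hcy
    · exact h
  have hyv' : T.IsAncestor r y v := by
    rcases (anc_child_iff hT hvc havc).mp hyc with h | rfl
    · exact h
    · exact absurd (anc_refl y) hcy
  by_cases ht : T.Adj x y
  · obtain ⟨q, hq⟩ := exists_path' hT r y
    have hxq : x ∉ q.support := fun hm => hcy (anc_trans hT hx (anc_of_mem hT hq hm))
    have h2 : (q.concat ht.symm).IsPath := concat_isPath hq hxq
    have hcx := hx _ h2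
    rcases (mem_support_concat q ht.symm).mp hcx with hc1 | rfl
    · exact hcy (anc_of_mem hT hq hc1)
    · exact hyv (parent_unique hT hvc havc ht.symm hyc)
  · exact hnb ⟨x, y, hxy, ht, hx, hyv', hyv⟩

private lemma transfer_reachable (hle : T ≤ G) {v : V} :
    ∀ {a b : V} (w : T.Walk a b), v ∉ w.support → ∀ (ha : a ≠ v) (hb : b ≠ v),
    (G.induce {u : V | u ≠ v}).Reachable ⟨a, ha⟩ ⟨b, hb⟩ := by
  intro a b w
  induction w with
  | nil => intro _ ha hb; exact Reachable.refl _
  | @cons a a' b h q ih =>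
    intro hv ha hb
    rw [Walk.support_cons] at hv
    have h1 : v ∉ q.support := fun hm => hv (List.mem_cons_of_mem _ hm)
    have ha' : a' ≠ v := fun e => h1 (e ▸ q.start_mem_support)
    exact Reachable.trans (Adj.reachable (by exact hle h)) (ih h1 ha' hb)

end SimpleGraph

open SimpleGraph

theorem cut_vertex_iff_child_no_backedge {V : Type*} [Fintype V]
    (G T : SimpleGraph V) (r : V)
    (hG : G.Connected) (hle : T ≤ G) (hT : T.IsTree)
    (hdfs : ∀ x y : V, G.Adj x y →
      T.IsAncestor r x y ∨ T.IsAncestor r y x)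
    (v : V) (hvr : v ≠ r) :
    ¬ (G.induce {u : V | u ≠ v}).Connected ↔
      ∃ c : V, (T.Adj v c ∧ T.IsAncestor r v c) ∧
        ¬ ∃ x y : V, G.Adj x y ∧ ¬ T.Adj x y ∧
          T.IsAncestor r c x ∧ T.IsAncestor r y v ∧ y ≠ v := by
  classical
  constructor
  · -- not connected → exists child with no back edge
    intro hnc
    by_contra hno
    push_neg at hno
    apply hnc
    rw [connected_iff]
    refine ⟨?_, ⟨⟨r, Ne.symm hvr⟩⟩⟩
    have key : ∀ (u : V) (hu : u ≠ v),
        (G.induce {u : V | u ≠ v}).Reachable ⟨u, hu⟩ ⟨r, Ne.symm hvr⟩ := by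
      intro u hu
      obtain ⟨p, hp⟩ := exists_path' hT r u
      by_cases hvp : v ∈ p.support
      · -- u is a strict descendant of v
        have hd := hp.dropUntil hvp
        have hvu : v ≠ u := Ne.symm hu
        obtain ⟨c, hadj, q, hq⟩ := Walk.exists_eq_cons_of_ne hvu (p.dropUntil v hvp)
        rw [hq] at hd
        rw [Walk.cons_isPath_iff] at hd
        obtain ⟨hqp, hvq⟩ := hd
        have hcd : c ∈ (p.dropUntil v hvp).support.tail := by
          rw [hq, Walk.support_cons]
          exact q.start_mem_support
        have hcp : c ∈ p.support :=
          p.support_dropUntil_subset hvp (List.mem_of_mem_tail hcd)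
        have hAvc : T.IsAncestor r v c := by
          rcases anc_comparable hT (anc_of_mem hT hp hvp) (anc_of_mem hT hp hcp) with h | h
          · exact h
          · exfalso
            have hct : c ∈ (p.takeUntil v hvp).support := h _ (hp.takeUntil hvp)
            have hnodup := hp.support_nodup
            rw [← Walk.take_spec p hvp, Walk.support_append, List.nodup_append] at hnodup
            exact hnodup.2.2 _ hct _ hcd rfl
        obtain ⟨x, y, hxy, hnt, hcx, hyanc, hyvne⟩ := hno c ⟨hadj, hAvc⟩
        have hcne : c ≠ v := hadj.ne'
        -- u reaches c
        have ruc : (G.induce {u : V | u ≠ v}).Reachable ⟨u, hu⟩ ⟨c, hcne⟩ :=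
          transfer_reachable hle q.reverse
            (by rwa [Walk.support_reverse, List.mem_reverse]) hu hcne
        -- c reaches x
        obtain ⟨px, hpx⟩ := exists_path' hT r x
        have hcpx : c ∈ px.support := hcx px hpx
        have hxne : x ≠ v := by
          rintro rfl
          exact hcne (anc_antisymm hT hcx hAvc)
        have hvs : v ∉ (px.dropUntil c hcpx).support := by
          intro hv2
          have hvtail : v ∈ (px.dropUntil c hcpx).support.tail := by
            rw [(px.dropUntil c hcpx).support_eq_cons] at hv2
            rcases List.mem_cons.mp hv2 with hv2 | hv2
            · exact absurd hv2 hcne.symm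
            · exact hv2
          have hvt : v ∈ (px.takeUntil c hcpx).support := hAvc _ (hpx.takeUntil hcpx)
          have hnodup := hpx.support_nodup
          rw [← Walk.take_spec px hcpx, Walk.support_append, List.nodup_append] at hnodup
          exact hnodup.2.2 _ hvt _ hvtail rfl
        have rcx : (G.induce {u : V | u ≠ v}).Reachable ⟨c, hcne⟩ ⟨x, hxne⟩ :=
          transfer_reachable hle (px.dropUntil c hcpx) hvs hcne hxne
        -- x reaches y by the back edge
        have rxy : (G.induce {u : V | u ≠ v}).Reachable ⟨x, hxne⟩ ⟨y, hyvne⟩ :=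
          Adj.reachable (by exact hxy)
        -- y reaches r
        obtain ⟨py, hpy⟩ := exists_path' hT r y
        have hvpy : v ∉ py.support := by
          intro hv2
          exact hyvne (anc_antisymm hT hyanc (anc_of_mem hT hpy hv2))
        have ryr : (G.induce {u : V | u ≠ v}).Reachable ⟨y, hyvne⟩ ⟨r, Ne.symm hvr⟩ :=
          transfer_reachable hle py.reverse
            (by rwa [Walk.support_reverse, List.mem_reverse]) hyvne (Ne.symm hvr)
        exact ruc.trans (rcx.trans (rxy.trans ryr))
      · exact transfer_reachable hle p.reverse
          (by rwa [Walk.support_reverse, List.mem_reverse]) hu (Ne.symm hvr)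
    intro a b
    exact (key a.1 a.2).trans (key b.1 b.2).symm
  · -- exists child with no back edge → not connected
    rintro ⟨c, ⟨hvc, havc⟩, hnb⟩ hcon
    have hcne : c ≠ v := hvc.ne'
    have hrne : r ≠ v := Ne.symm hvr
    obtain ⟨w⟩ := hcon.preconnected ⟨c, hcne⟩ ⟨r, hrne⟩
    have step : ∀ (a b : {u : V | u ≠ v}) (w : (G.induce {u : V | u ≠ v}).Walk a b),
        T.IsAncestor r c a.1 → T.IsAncestor r c b.1 := by
      intro a b w
      induction w with
      | nil => exact id
      | @cons a a' b h q ih =>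
        intro hca
        refine ih ?_
        exact closed_step hT hdfs hvc havc hnb (by exact h) hca a'.2
    have hcr : T.IsAncestor r c r := step _ _ w (anc_refl c)
    have hcr' : c = r := anc_antisymm hT hcr (anc_root c)
    rw [hcr'] at havc
    have : v ∈ (Walk.nil : T.Walk r r).support := havc Walk.nil Walk.IsPath.nil
    rw [Walk.support_nil] at this
    exact hvr (List.mem_singleton.mp this)
end

section
/- Let G be a finite connected simple graph. Two distinct vertices u and v are bridge-equivalent (joined by a walk avoiding all bridges) if and only if there exist two edge-disjoint u–v paths in G. -/
/-- `u` and `v` are bridge-equivalent: `u = v` or there is a walk from `u` to `v`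
none of whose edges is a bridge of `G`. -/
def SimpleGraph.BridgeEquiv {V : Type*} (G : SimpleGraph V) (u v : V) : Prop :=
  u = v ∨ ∃ w : G.Walk u v, ∀ e ∈ w.edges, ¬ G.IsBridge e

set_option linter.unusedSectionVars false

section Aux

open SimpleGraph Walk

variable {V : Type*} [DecidableEq V] {G : SimpleGraph V}

/-- Two edge-disjoint paths between `u` and `v`. -/
def TwoDisjoint (G : SimpleGraph V) (u v : V) : Prop :=
  ∃ p q : G.Walk u v, p.IsPath ∧ q.IsPath ∧ ∀ e ∈ p.edges, e ∉ q.edges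

lemma TwoDisjoint.symm {u v : V} (h : TwoDisjoint G u v) : TwoDisjoint G v u := by
  obtain ⟨p, q, hp, hq, hd⟩ := h
  exact ⟨p.reverse, q.reverse, hp.reverse, hq.reverse, fun e he hc => by
    rw [edges_reverse, List.mem_reverse] at he hc
    exact hd e he hc⟩

lemma nonbridge_walk {w v : V} (hadj : G.Adj w v) (hbr : ¬ G.IsBridge s(w, v)) :
    ∃ R : G.Walk w v, R.IsPath ∧ s(w, v) ∉ R.edges := by
  rw [isBridge_iff] at hbr
  push_neg at hbr
  have hr := hbr
  rw [reachable_delete_edges_iff_exists_walk] at hr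
  obtain ⟨p, hp⟩ := hr
  exact ⟨p.bypass, p.bypass_isPath, fun hc => hp (p.edges_bypass_subset hc)⟩

lemma base_case {u v : V} (hadj : G.Adj u v) (hbr : ¬ G.IsBridge s(u, v)) :
    TwoDisjoint G u v := by
  obtain ⟨R, hR, hRe⟩ := nonbridge_walk hadj hbr
  refine ⟨Walk.cons hadj Walk.nil, R, ?_, hR, ?_⟩
  · rw [cons_isPath_iff]
    exact ⟨IsPath.nil, by simp [hadj.ne]⟩
  · intro e he
    simp only [edges_cons, edges_nil, List.mem_singleton] at he
    subst he; exact hRe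

lemma last_hit : ∀ {a b : V} (Q : G.Walk a b) (S : Set V), a ∉ S → b ∈ S →
    ∃ x ∈ S, ∃ T : G.Walk a x, (∀ e ∈ T.edges, e ∈ Q.edges) ∧
      ∀ y ∈ T.support, y ∈ S → y = x := by
  intro a b Q
  induction Q with
  | nil => intro S ha hb; exact absurd hb ha
  | @cons a c b h Q' ih =>
    intro S ha hb
    by_cases hc : c ∈ S
    · refine ⟨c, hc, Walk.cons h Walk.nil, ?_, ?_⟩
      · intro e he
        simp only [edges_cons, edges_nil, List.mem_singleton] at he
        simp [he]
      · intro y hy hyS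
        simp only [support_cons, support_nil, List.mem_cons, List.mem_singleton,
          List.not_mem_nil, or_false] at hy
        rcases hy with rfl | rfl
        · exact absurd hyS ha
        · rfl
    · obtain ⟨x, hxS, T', hT'e, hT'S⟩ := ih S hc hb
      refine ⟨x, hxS, Walk.cons h T', ?_, ?_⟩
      · intro e he
        simp only [edges_cons, List.mem_cons] at he ⊢
        rcases he with rfl | he
        · exact Or.inl rfl
        · exact Or.inr (hT'e e he)
      · intro y hy hyS
        simp only [support_cons, List.mem_cons] at hy
        rcases hy with rfl | hy
        · exact absurd hyS ha
        · exact hT'S y hy hyS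

set_option linter.unusedSectionVars false

lemma core {u w v : V} (P1 P2 : G.Walk u w) (h1 : P1.IsPath) (h2 : P2.IsPath)
    (hdisj : ∀ e ∈ P1.edges, e ∉ P2.edges) (hadj : G.Adj w v)
    (hv1 : v ∉ P1.support) (hv2 : v ∉ P2.support)
    {x : V} (hx : x ∈ P1.support) (T : G.Walk x v) (hT : T.IsPath)
    (hTe : s(w, v) ∉ T.edges)
    (hTS : ∀ y ∈ T.support, (y ∈ P1.support ∨ y ∈ P2.support) → y = x) :
    TwoDisjoint G u v := by
  have hxtail : x ∉ T.support.tail := by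
    intro hc
    have := hT.support_nodup
    rw [T.support_eq_cons] at this
    exact (List.nodup_cons.mp this).1 hc
  refine ⟨(P1.takeUntil x hx).append T, P2.concat hadj, ?_, ?_, ?_⟩
  · rw [isPath_def, support_append, List.nodup_append]
    refine ⟨(h1.takeUntil hx).support_nodup, hT.support_nodup.tail, ?_⟩
    intro y hy y' hy' hyy'
    subst hyy'
    have hyP1 : y ∈ P1.support := P1.support_takeUntil_subset hx hy
    have : y = x := hTS y (List.mem_of_mem_tail hy') (Or.inl hyP1)
    subst this
    exact hxtail hy'
  · rw [concat_eq_append, isPath_def, support_append, List.nodup_append]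
    refine ⟨h2.support_nodup, by simp, ?_⟩
    intro y hy y' hy' hyy'
    simp only [support_cons, support_nil, List.tail_cons, List.mem_singleton] at hy'
    subst hy'
    subst hyy'
    exact hv2 hy
  · intro e he hc
    rw [edges_append, List.mem_append] at he
    rw [edges_concat, List.concat_eq_append, List.mem_append, List.mem_singleton] at hc
    rcases he with he | he
    · have heP1 : e ∈ P1.edges := P1.edges_takeUntil_subset hx he
      rcases hc with hc | rfl
      · exact hdisj e heP1 hc
      · exact hv1 (P1.snd_mem_support_of_mem_edges heP1)
    · rcases hc with hc | rfl
      · -- e ∈ T.edges and e ∈ P2.edges : impossible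
        revert he hc
        induction e using Sym2.ind with
        | _ c d =>
          intro he hc
          have hcT : c ∈ T.support := T.fst_mem_support_of_mem_edges he
          have hdT : d ∈ T.support := T.snd_mem_support_of_mem_edges he
          have hcP : c ∈ P2.support := P2.fst_mem_support_of_mem_edges hc
          have hdP : d ∈ P2.support := P2.snd_mem_support_of_mem_edges hc
          have hc' : c = x := hTS c hcT (Or.inr hcP)
          have hd' : d = x := hTS d hdT (Or.inr hdP)
          rw [hc', hd'] at hc
          have : G.Adj x x := G.mem_edgeSet.mp (P2.edges_subset_edgeSet hc)
          exact G.irrefl this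
      · exact hTe he

lemma not_end_mem_takeUntil {u w v : V} {P : G.Walk u w} (hP : P.IsPath)
    (hv : v ∈ P.support) (hwv : w ≠ v) : w ∉ (P.takeUntil v hv).support := by
  intro hw
  have hnd := hP.support_nodup
  have hspec := P.take_spec hv
  have : P.support = (P.takeUntil v hv).support ++ (P.dropUntil v hv).support.tail := by
    conv_lhs => rw [← hspec]
    rw [support_append]
  rw [this, List.nodup_append] at hnd
  have hwD : w ∈ (P.dropUntil v hv).support := (P.dropUntil v hv).end_mem_support
  rw [(P.dropUntil v hv).support_eq_cons] at hwD
  rw [List.mem_cons] at hwD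
  rcases hwD with hwD | hwD
  · exact hwv hwD
  · exact hnd.2.2 w hw w hwD rfl

lemma step {u w v : V} (hP : TwoDisjoint G u w) (hadj : G.Adj w v)
    (hbr : ¬ G.IsBridge s(w, v)) (huv : u ≠ v) : TwoDisjoint G u v := by
  obtain ⟨P1, P2, h1, h2, hdisj⟩ := hP
  have hdisj' : ∀ e ∈ P2.edges, e ∉ P1.edges := fun e he hc => hdisj e hc he
  have hwv : w ≠ v := hadj.ne
  -- helper for the "v on one path" case
  have onecase : ∀ (Q1 Q2 : G.Walk u w), Q1.IsPath → Q2.IsPath →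
      (∀ e ∈ Q1.edges, e ∉ Q2.edges) → v ∈ Q1.support → v ∉ Q2.support →
      TwoDisjoint G u v := by
    intro Q1 Q2 hq1 hq2 hd hvQ1 hvQ2
    have hwA : w ∉ (Q1.takeUntil v hvQ1).support := not_end_mem_takeUntil hq1 hvQ1 hwv
    refine ⟨Q1.takeUntil v hvQ1, Q2.concat hadj, hq1.takeUntil hvQ1, ?_, ?_⟩
    · rw [concat_eq_append, isPath_def, support_append, List.nodup_append]
      refine ⟨hq2.support_nodup, by simp, ?_⟩
      intro y hy y' hy' hyy'
      simp only [support_cons, support_nil, List.tail_cons, List.mem_singleton] at hy'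
      subst hy'
      subst hyy'
      exact hvQ2 hy
    · intro e he hc
      rw [edges_concat, List.concat_eq_append, List.mem_append, List.mem_singleton] at hc
      have heQ1 : e ∈ Q1.edges := Q1.edges_takeUntil_subset hvQ1 he
      rcases hc with hc | rfl
      · exact hd e heQ1 hc
      · exact hwA ((Q1.takeUntil v hvQ1).fst_mem_support_of_mem_edges he)
  by_cases hv1 : v ∈ P1.support
  · by_cases hv2 : v ∈ P2.support
    · exact ⟨P1.takeUntil v hv1, P2.takeUntil v hv2, h1.takeUntil hv1, h2.takeUntil hv2,
        fun e he hc => hdisj e (P1.edges_takeUntil_subset hv1 he)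
          (P2.edges_takeUntil_subset hv2 hc)⟩
    · exact onecase P1 P2 h1 h2 hdisj hv1 hv2
  · by_cases hv2 : v ∈ P2.support
    · obtain ⟨p, q, hp, hq, hd⟩ := onecase P2 P1 h2 h1 hdisj' hv2 hv1
      exact ⟨q, p, hq, hp, fun e he hc => hd e hc he⟩
    · -- main surgery
      obtain ⟨R, hR, hRe⟩ := nonbridge_walk hadj hbr
      set S : Set V := {y | y ∈ P1.support ∨ y ∈ P2.support} with hS
      have hvS : v ∉ S := by
        intro h; rcases h with h | h; exacts [hv1 h, hv2 h]
      have hwS : w ∈ S := Or.inl P1.end_mem_support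
      obtain ⟨x, hxS, T0, hT0e, hT0S⟩ := last_hit R.reverse S hvS hwS
      set T : G.Walk x v := T0.bypass.reverse with hT
      have hTpath : T.IsPath := T0.bypass_isPath.reverse
      have hTsup : ∀ y ∈ T.support, y ∈ S → y = x := by
        intro y hy hyS
        rw [support_reverse, List.mem_reverse] at hy
        exact hT0S y (T0.support_bypass_subset hy) hyS
      have hTedges : ∀ e ∈ T.edges, e ∈ R.edges := by
        intro e he
        rw [edges_reverse, List.mem_reverse] at he
        have := hT0e e (T0.edges_bypass_subset he)
        rwa [edges_reverse, List.mem_reverse] at this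
      have hTwv : s(w, v) ∉ T.edges := fun hc => hRe (hTedges _ hc)
      rcases hxS with hx | hx
      · exact core P1 P2 h1 h2 hdisj hadj hv1 hv2 hx T hTpath hTwv
          (fun y hy hyS => hTsup y hy hyS)
      · obtain ⟨p, q, hp, hq, hd⟩ := core P2 P1 h2 h1 hdisj' hadj hv2 hv1 hx T hTpath hTwv
          (fun y hy hyS => hTsup y hy (Or.symm hyS))
        exact ⟨q, p, hq, hp, fun e he hc => hd e hc he⟩

lemma ofWalk : ∀ {u v : V} (W : G.Walk u v), (∀ e ∈ W.edges, ¬ G.IsBridge e) →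
    u = v ∨ TwoDisjoint G u v := by
  intro u v W
  induction W with
  | nil => intro _; exact Or.inl rfl
  | @cons u a v h W' ih =>
    intro hbr
    have hb0 : ¬ G.IsBridge s(u, a) := hbr _ (by simp)
    have hbr' : ∀ e ∈ W'.edges, ¬ G.IsBridge e := fun e he => hbr e (by simp [he])
    by_cases huv : u = v
    · exact Or.inl huv
    right
    rcases ih hbr' with rfl | hTD
    · exact base_case h hb0
    · by_cases hav : a = v
      · subst hav; exact base_case h hb0
      · have h1 : TwoDisjoint G v a := hTD.symm
        have hb0' : ¬ G.IsBridge s(a, u) := by rwa [Sym2.eq_swap]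
        exact (step h1 h.symm hb0' (Ne.symm huv)).symm

lemma exists_walk_avoiding : ∀ {a b : V} (p : G.Walk a b) (q : G.Walk a b) (e : Sym2 V),
    p.edges.Nodup → e ∈ p.edges → e ∉ q.edges →
    ∀ x y : V, e = s(x, y) → ∃ W : G.Walk x y, e ∉ W.edges := by
  intro a b p
  induction p with
  | nil => intro q e _ he; simp at he
  | @cons a c b h p' ih =>
    intro q e hnd he hq x y hxy
    rw [edges_cons, List.nodup_cons] at hnd
    rw [edges_cons, List.mem_cons] at he
    rcases he with rfl | he
    · -- e = s(a, c); walk q ++ p'.reverse from a to c avoids e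
      have hW : ∃ W : G.Walk a c, s(a, c) ∉ W.edges := by
        refine ⟨q.append p'.reverse, ?_⟩
        rw [edges_append, List.mem_append, edges_reverse, List.mem_reverse]
        rintro (hc | hc)
        · exact hq hc
        · exact hnd.1 hc
      obtain ⟨W, hW⟩ := hW
      rw [Sym2.eq_iff] at hxy
      rcases hxy with ⟨rfl, rfl⟩ | ⟨rfl, rfl⟩
      · exact ⟨W, hW⟩
      · exact ⟨W.reverse, by rwa [edges_reverse, List.mem_reverse]⟩
    · have hne : s(a, c) ≠ e := fun hc => hnd.1 (hc ▸ he)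
      refine ih (Walk.cons h.symm q) e hnd.2 he ?_ x y hxy
      rw [edges_cons, List.mem_cons]
      rintro (hc | hc)
      · exact hne (Sym2.eq_swap.trans hc.symm)
      · exact hq hc

end Aux

open SimpleGraph Walk

theorem bridgeEquiv_iff_two_edge_disjoint_paths {V : Type*} [Fintype V]
    (G : SimpleGraph V) (hG : G.Connected) (u v : V) (huv : u ≠ v) :
    G.BridgeEquiv u v ↔
      ∃ p q : G.Walk u v, p.IsPath ∧ q.IsPath ∧
        ∀ e ∈ p.edges, e ∉ q.edges := by
  classical
  constructor
  · rintro (rfl | ⟨w, hw⟩)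
    · exact absurd rfl huv
    · rcases ofWalk w hw with rfl | hTD
      · exact absurd rfl huv
      · exact hTD
  · rintro ⟨p, q, hp, hq, hdisj⟩
    refine Or.inr ⟨p, ?_⟩
    intro e he hbr
    revert he hbr
    induction e using Sym2.ind with
    | _ x y =>
      intro he hbr
      rw [isBridge_iff_adj_and_forall_walk_mem_edges] at hbr
      obtain ⟨W, hW⟩ := exists_walk_avoiding p q s(x, y) hp.isTrail.edges_nodup he
        (hdisj _ he) x y rfl
      exact hW (hbr W)
end

section
/- Let T be a rooted spanning tree of a finite connected graph G. Within each bridge-equivalence class B of G, there is a unique vertex of B that is an ancestor (in T) of all vertices of B. -/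
/-!
Among the vertices of a bridge-equivalence class `B`, pick one, `a`, closest to the root. Since `B`
induces a connected subgraph, every `b ∈ B` is reached from `a` by a walk inside `B`, and `a` stays
an ancestor along it: at an edge `x y` with `a` an ancestor of `x`, the DFS property makes `x` and
`y` comparable; if `y` is an ancestor of `x`, then `a` and `y` both lie on the tree path to `x`, so
one is an ancestor of the other, and `y` cannot be a proper ancestor of `a` by the choice of `a`.
Uniqueness is antisymmetry of the ancestor relation.
-/

namespace SimpleGraph

variable {V : Type*}

lemma Walk.mem_support_takeUntil_iff [DecidableEq V] {G : SimpleGraph V} {u v a y : V}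
    (p : G.Walk u v) (hy : y ∈ p.support) (ha : a ∈ p.support) :
    a ∈ (p.takeUntil y hy).support ↔ p.support.idxOf a ≤ p.support.idxOf y := by
  rw [Walk.takeUntil_eq_take, Walk.support_copy, Walk.support_take,
    List.mem_take_iff_idxOf_lt ha, Nat.lt_succ_iff]

lemma IsTree.length_eq_dist {T : SimpleGraph V} (hT : T.IsTree) {u v : V} {p : T.Walk u v}
    (hp : p.IsPath) : p.length = T.dist u v := by
  obtain ⟨q, hq, hqdist⟩ := hT.connected.exists_path_of_dist u v
  rw [(hT.existsUnique_path u v).unique hp hq, hqdist]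

section Ancestor

variable {T : SimpleGraph V} {r a b x y : V}

lemma isAncestor_refl (r v : V) : T.IsAncestor r v v :=
  fun p _ => p.end_mem_support

lemma IsAncestor.trans (hax : T.IsAncestor r a x) (hxy : T.IsAncestor r x y) :
    T.IsAncestor r a y := by
  classical
  intro p hp
  have hx := hxy p hp
  exact p.support_takeUntil_subset_support hx (hax _ (hp.takeUntil hx))

lemma IsTree.isAncestor_of_mem_support (hT : T.IsTree) {p : T.Walk r b} (hp : p.IsPath)
    (ha : a ∈ p.support) : T.IsAncestor r a b := by
  intro q hq
  rwa [(hT.existsUnique_path r b).unique hq hp]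

/-- Ancestors of `x` are the vertices of the tree path to `x`, ordered by their position on it. -/
lemma IsAncestor.total (hT : T.IsTree) (hax : T.IsAncestor r a x) (hyx : T.IsAncestor r y x) :
    T.IsAncestor r a y ∨ T.IsAncestor r y a := by
  classical
  obtain ⟨p, hp, -⟩ := hT.existsUnique_path r x
  have ha := hax p hp
  have hy := hyx p hp
  rcases le_total (p.support.idxOf a) (p.support.idxOf y) with h | h
  · exact .inl <| hT.isAncestor_of_mem_support (hp.takeUntil hy)
      ((p.mem_support_takeUntil_iff hy ha).2 h)
  · exact .inr <| hT.isAncestor_of_mem_support (hp.takeUntil ha)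
      ((p.mem_support_takeUntil_iff ha hy).2 h)

lemma IsAncestor.dist_le (hT : T.IsTree) (hab : T.IsAncestor r a b) :
    T.dist r a ≤ T.dist r b := by
  classical
  obtain ⟨p, hp, -⟩ := hT.existsUnique_path r b
  have ha := hab p hp
  rw [← hT.length_eq_dist hp, ← hT.length_eq_dist (hp.takeUntil ha)]
  exact p.length_takeUntil_le_length ha

lemma IsAncestor.eq_of_dist_le (hT : T.IsTree) (hab : T.IsAncestor r a b)
    (hdist : T.dist r b ≤ T.dist r a) : a = b := by
  classical
  obtain ⟨p, hp, -⟩ := hT.existsUnique_path r b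
  have ha := hab p hp
  by_contra hne
  have hlt := p.length_takeUntil_lt_length ha hne
  rw [hT.length_eq_dist hp, hT.length_eq_dist (hp.takeUntil ha)] at hlt
  omega

lemma IsAncestor.antisymm (hT : T.IsTree) (hab : T.IsAncestor r a b)
    (hba : T.IsAncestor r b a) : a = b :=
  hab.eq_of_dist_le hT (hba.dist_le hT)

end Ancestor

section TopVertex

variable {G T : SimpleGraph V} {r : V}

lemma isAncestor_of_walk (hT : T.IsTree)
    (hdfs : ∀ x y : V, G.Adj x y → T.IsAncestor r x y ∨ T.IsAncestor r y x)
    {S : Set V} {a : V} (htop : ∀ y ∈ S, T.IsAncestor r y a → y = a) {x b : V}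
    (w : G.Walk x b) (hw : ∀ z ∈ w.support, z ∈ S) (hax : T.IsAncestor r a x) :
    T.IsAncestor r a b := by
  induction w with
  | nil => exact hax
  | @cons x y b hadj w ih =>
    refine ih (fun z hz => hw z (List.mem_cons_of_mem _ hz)) ?_
    rcases hdfs x y hadj with hxy | hyx
    · exact hax.trans hxy
    · rcases hax.total hT hyx with hay | hya
      · exact hay
      · rw [htop y (hw y (by simp)) hya]
        exact isAncestor_refl r a

theorem exists_unique_isAncestor_of_preconnected (hT : T.IsTree)
    (hdfs : ∀ x y : V, G.Adj x y → T.IsAncestor r x y ∨ T.IsAncestor r y x)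
    {S : Set V} (hS : (G.induce S).Preconnected) (hne : S.Nonempty) :
    ∃! a, a ∈ S ∧ ∀ b ∈ S, T.IsAncestor r a b := by
  obtain ⟨a, haS, hmin⟩ := (measure fun v => T.dist r v).wf.has_min S hne
  have htop : ∀ y ∈ S, T.IsAncestor r y a → y = a := fun y hyS hya =>
    hya.eq_of_dist_le hT (not_lt.1 (hmin y hyS))
  have hdom : ∀ b ∈ S, T.IsAncestor r a b := by
    intro b hbS
    obtain ⟨w⟩ := hS ⟨a, haS⟩ ⟨b, hbS⟩
    have hwS : ∀ z ∈ (w.map (Embedding.induce S).toHom).support, z ∈ S := by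
      simp only [Walk.support_map, List.mem_map]
      rintro _ ⟨z, -, rfl⟩
      exact z.2
    exact isAncestor_of_walk hT hdfs htop _ hwS (isAncestor_refl r a)
  exact ⟨a, ⟨haS, hdom⟩, fun a' ⟨ha'S, ha'dom⟩ => (ha'dom a haS).antisymm hT (hdom a' ha'S)⟩

end TopVertex

section BridgeEquiv

variable {G : SimpleGraph V} {x y z : V}

lemma BridgeEquiv.symm (h : G.BridgeEquiv x y) : G.BridgeEquiv y x := by
  rcases h with rfl | ⟨w, hw⟩
  · exact .inl rfl
  · exact .inr ⟨w.reverse, fun e he => hw e (by simpa using he)⟩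

lemma BridgeEquiv.trans (hxy : G.BridgeEquiv x y) (hyz : G.BridgeEquiv y z) :
    G.BridgeEquiv x z := by
  rcases hxy with rfl | ⟨w₁, hw₁⟩
  · exact hyz
  rcases hyz with rfl | ⟨w₂, hw₂⟩
  · exact .inr ⟨w₁, hw₁⟩
  refine .inr ⟨w₁.append w₂, fun e he => ?_⟩
  rw [Walk.edges_append, List.mem_append] at he
  exact he.elim (hw₁ e) (hw₂ e)

lemma BridgeEquiv.exists_walk (h : G.BridgeEquiv x y) :
    ∃ w : G.Walk x y, ∀ z ∈ w.support, G.BridgeEquiv x z := by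
  classical
  rcases h with rfl | ⟨w, hw⟩
  · exact ⟨.nil, fun z hz => .inl (Walk.mem_support_nil_iff.1 hz).symm⟩
  refine ⟨w, fun z hz => .inr ⟨w.takeUntil z hz, fun e he => hw e ?_⟩⟩
  exact w.edges_takeUntil_subset_edges hz he

lemma preconnected_induce_setOf_bridgeEquiv (u : V) :
    (G.induce {v | G.BridgeEquiv u v}).Preconnected := by
  rintro ⟨x, hx⟩ ⟨y, hy⟩
  obtain ⟨w, hw⟩ := (hx.symm.trans hy).exists_walk
  exact ⟨w.induce _ fun z hz => hx.trans (hw z hz)⟩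

end BridgeEquiv

end SimpleGraph

theorem representative_node_exists_unique_general {V : Type*}
    (G T : SimpleGraph V) (r : V)
    (hT : T.IsTree)
    (hdfs : ∀ x y : V, G.Adj x y →
      T.IsAncestor r x y ∨ T.IsAncestor r y x)
    (B : Set V) (u : V) (hB : B = {v : V | G.BridgeEquiv u v}) :
    ∃! a : V, a ∈ B ∧ ∀ b ∈ B, T.IsAncestor r a b := by
  subst hB
  exact SimpleGraph.exists_unique_isAncestor_of_preconnected hT hdfs
    (SimpleGraph.preconnected_induce_setOf_bridgeEquiv u) ⟨u, .inl rfl⟩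

theorem representative_node_exists_unique {V : Type*} [Fintype V]
    (G T : SimpleGraph V) (r : V)
    (hG : G.Connected) (hle : T ≤ G) (hT : T.IsTree)
    (hdfs : ∀ x y : V, G.Adj x y →
      T.IsAncestor r x y ∨ T.IsAncestor r y x)
    (B : Set V) (u : V) (hB : B = {v : V | G.BridgeEquiv u v}) :
    ∃! a : V, a ∈ B ∧ ∀ b ∈ B, T.IsAncestor r a b :=
  representative_node_exists_unique_general G T r hT hdfs B u hB
end

section
/- Let T be a DFS spanning tree of a connected graph G rooted at r, let v be a non-root vertex, and for a tree edge suppose the 'count' of v is defined as (number of non-tree edges (x,y) with x a descendant of v and y a proper ancestor of v). Then count(v) equals the sum over children c of v of count(c), minus the number of non-tree edges from a descendant of a child of v to v itself, plus the number of non-tree edges from v to a proper ancestor of v. -/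
/-- The number of non-tree edges bypassing the parent edge of `v`: pairs `(x, y)`
with `(x, y)` a non-tree edge of `G`, `x` a descendant of `v` and `y` a proper
ancestor of `v` (with respect to `T` rooted at `r`). -/
noncomputable def bypassCount {V : Type*} (G T : SimpleGraph V) (r v : V) : ℕ :=
  Set.ncard {e : V × V | G.Adj e.1 e.2 ∧ ¬ T.Adj e.1 e.2 ∧
    T.IsAncestor r v e.1 ∧ T.IsAncestor r e.2 v ∧ e.2 ≠ v}

section TreeLemmas
variable {V : Type*} {T : SimpleGraph V} {r : V}

noncomputable def tpath (hT : T.IsTree) (r v : V) : T.Walk r v :=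
  (hT.existsUnique_path r v).choose

lemma tpath_isPath (hT : T.IsTree) (r v : V) : (tpath hT r v).IsPath :=
  (hT.existsUnique_path r v).choose_spec.1

lemma tpath_eq (hT : T.IsTree) {v : V} (p : T.Walk r v) (hp : p.IsPath) :
    p = tpath hT r v :=
  (hT.existsUnique_path r v).choose_spec.2 p hp

lemma isAncestor_iff (hT : T.IsTree) {u v : V} :
    T.IsAncestor r u v ↔ u ∈ (tpath hT r v).support := by
  constructor
  · exact fun h => h _ (tpath_isPath hT r v)
  · intro h p hp
    rwa [tpath_eq hT p hp]

lemma isAncestor_self (hT : T.IsTree) (v : V) : T.IsAncestor r v v :=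
  fun p _ => p.end_mem_support

lemma isAncestor_trans (hT : T.IsTree) {u v w : V}
    (h1 : T.IsAncestor r u v) (h2 : T.IsAncestor r v w) : T.IsAncestor r u w := by
  classical
  rw [isAncestor_iff hT] at h1 h2 ⊢
  have hp := tpath_isPath hT r w
  have htake : ((tpath hT r w).takeUntil v h2) = tpath hT r v :=
    tpath_eq hT _ (hp.takeUntil h2)
  exact (tpath hT r w).support_takeUntil_subset h2 (htake ▸ h1)

lemma isAncestor_antisymm (hT : T.IsTree) {u v : V}
    (h1 : T.IsAncestor r u v) (h2 : T.IsAncestor r v u) : u = v := by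
  rw [isAncestor_iff hT] at h1 h2
  obtain ⟨q, s, hqs⟩ := SimpleGraph.Walk.mem_support_iff_exists_append.mp h1
  have hp := tpath_isPath hT r v
  rw [hqs] at hp
  have hq : q.IsPath := hp.of_append_left
  have hqe : q = tpath hT r u := tpath_eq hT q hq
  rw [← hqe] at h2
  have hnd : (q.append s).support.Nodup := hp.support_nodup
  rw [SimpleGraph.Walk.support_append] at hnd
  have hvs : v ∈ s.support := s.end_mem_support
  rw [s.support_eq_cons] at hvs
  rcases List.mem_cons.mp hvs with h | h
  · exact h.symm
  · exact absurd h2 (List.disjoint_right.mp (List.disjoint_of_nodup_append hnd) h)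

lemma child_tpath (hT : T.IsTree) {v c : V} (hadj : T.Adj v c)
    (hanc : T.IsAncestor r v c) : tpath hT r c = (tpath hT r v).concat hadj := by
  have hcv : c ∉ (tpath hT r v).support := by
    intro h
    exact hadj.ne' (isAncestor_antisymm hT ((isAncestor_iff hT).2 h) hanc)
  refine (tpath_eq hT _ ?_).symm
  rw [SimpleGraph.Walk.isPath_def, SimpleGraph.Walk.support_concat]
  exact List.Nodup.append (tpath_isPath hT r v).support_nodup (List.nodup_singleton c)
    (by simpa using hcv)

lemma child_support (hT : T.IsTree) {v c : V} (hadj : T.Adj v c)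
    (hanc : T.IsAncestor r v c) :
    (tpath hT r c).support = (tpath hT r v).support ++ [c] := by
  rw [child_tpath hT hadj hanc, SimpleGraph.Walk.support_concat]

lemma anc_child_iff (hT : T.IsTree) {v c y : V} (hadj : T.Adj v c)
    (hanc : T.IsAncestor r v c) :
    T.IsAncestor r y c ↔ T.IsAncestor r y v ∨ y = c := by
  rw [isAncestor_iff hT, isAncestor_iff hT, child_support hT hadj hanc]
  simp

lemma child_exists (hT : T.IsTree) {v x : V} (hanc : T.IsAncestor r v x)
    (hne : v ≠ x) : ∃ c, T.Adj v c ∧ T.IsAncestor r v c ∧ T.IsAncestor r c x := by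
  classical
  have hv : v ∈ (tpath hT r x).support := (isAncestor_iff hT).1 hanc
  obtain ⟨q, s, hqs⟩ := SimpleGraph.Walk.mem_support_iff_exists_append.mp hv
  have hp := tpath_isPath hT r x
  rw [hqs] at hp
  have hq : q.IsPath := hp.of_append_left
  cases s with
  | nil => exact absurd rfl hne
  | @cons _ c _ h q2 =>
    refine ⟨c, h, ?_, ?_⟩
    · have hcq : c ∉ q.support := by
        have hnd := hp.support_nodup
        rw [SimpleGraph.Walk.support_append] at hnd
        have : c ∈ (SimpleGraph.Walk.cons h q2).support.tail := by
          simp [SimpleGraph.Walk.support_cons, SimpleGraph.Walk.start_mem_support]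
        exact fun hc => (List.disjoint_of_nodup_append hnd) hc this
      have hqc : (q.concat h).IsPath := by
        rw [SimpleGraph.Walk.isPath_def, SimpleGraph.Walk.support_concat]
        exact List.Nodup.append hq.support_nodup (List.nodup_singleton c) (by simpa using hcq)
      rw [isAncestor_iff hT, ← tpath_eq hT _ hqc, SimpleGraph.Walk.support_concat]
      simp [SimpleGraph.Walk.end_mem_support]
    · rw [isAncestor_iff hT, hqs, SimpleGraph.Walk.mem_support_append_iff]
      exact Or.inr (by simp [SimpleGraph.Walk.support_cons, SimpleGraph.Walk.start_mem_support])

lemma child_unique (hT : T.IsTree) {v c c' x : V}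
    (hadj : T.Adj v c) (hanc : T.IsAncestor r v c) (hcx : T.IsAncestor r c x)
    (hadj' : T.Adj v c') (hanc' : T.IsAncestor r v c') (hcx' : T.IsAncestor r c' x) :
    c = c' := by
  classical
  have key : ∀ {d : V}, T.Adj v d → T.IsAncestor r v d → T.IsAncestor r d x →
      (tpath hT r x).getVert ((tpath hT r v).length + 1) = d := by
    intro d hd hvd hdx
    have hdm : d ∈ (tpath hT r x).support := (isAncestor_iff hT).1 hdx
    have htake : (tpath hT r x).takeUntil d hdm = tpath hT r d :=
      tpath_eq hT _ ((tpath_isPath hT r x).takeUntil hdm)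
    have hspec := (tpath hT r x).take_spec hdm
    have hlen : ((tpath hT r x).takeUntil d hdm).length = (tpath hT r v).length + 1 := by
      rw [htake, child_tpath hT hd hvd, SimpleGraph.Walk.length_concat]
    conv_lhs => rw [← hspec]
    rw [SimpleGraph.Walk.getVert_append, ← hlen]
    simp [SimpleGraph.Walk.getVert_zero]
  rw [← key hadj hanc hcx, key hadj' hanc' hcx']

end TreeLemmas

open Classical in
private lemma ncard_filter_eq {α : Type*} [Fintype α] (p : α → Prop) :
    Set.ncard {x | p x} = (Finset.univ.filter p).card := by
  rw [Set.ncard_eq_toFinset_card', Set.toFinset_setOf]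

open Classical in
theorem bypassCount_recursion {V : Type*} [Fintype V]
    (G T : SimpleGraph V) (r : V)
    (hG : G.Connected) (hle : T ≤ G) (hT : T.IsTree)
    (hdfs : ∀ x y : V, G.Adj x y →
      T.IsAncestor r x y ∨ T.IsAncestor r y x)
    (v : V) (hvr : v ≠ r) :
    (bypassCount G T r v : ℤ) =
      (∑ c ∈ Finset.univ.filter (fun c => T.Adj v c ∧ T.IsAncestor r v c),
        (bypassCount G T r c : ℤ))
      - (Set.ncard {x : V | G.Adj x v ∧ ¬ T.Adj x v ∧
          ∃ c : V, T.Adj v c ∧ T.IsAncestor r v c ∧ T.IsAncestor r c x} : ℤ)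
      + (Set.ncard {y : V | G.Adj v y ∧ ¬ T.Adj v y ∧
          T.IsAncestor r y v ∧ y ≠ v} : ℤ) := by
  classical
  set F : V → Finset (V × V) := fun w => Finset.univ.filter
    (fun e : V × V => G.Adj e.1 e.2 ∧ ¬ T.Adj e.1 e.2 ∧
      T.IsAncestor r w e.1 ∧ T.IsAncestor r e.2 w ∧ e.2 ≠ w) with hF
  have hmemF : ∀ w (e : V × V), e ∈ F w ↔ (G.Adj e.1 e.2 ∧ ¬ T.Adj e.1 e.2 ∧
      T.IsAncestor r w e.1 ∧ T.IsAncestor r e.2 w ∧ e.2 ≠ w) := by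
    intro w e; rw [hF]; simp
  have hbc : ∀ w, bypassCount G T r w = (F w).card := by
    intro w
    rw [bypassCount, ncard_filter_eq, hF]
    congr!
  set Ch : Finset V := Finset.univ.filter (fun c => T.Adj v c ∧ T.IsAncestor r v c) with hCh
  have hmemCh : ∀ c, c ∈ Ch ↔ T.Adj v c ∧ T.IsAncestor r v c := by
    intro c; rw [hCh]; simp
  set A : Finset (V × V) := (F v).filter (fun e => ¬ e.1 = v) with hA
  set Bp : Finset (V × V) := (F v).filter (fun e => e.1 = v) with hBp
  set Bs : Finset V := Finset.univ.filter
    (fun y => G.Adj v y ∧ ¬ T.Adj v y ∧ T.IsAncestor r y v ∧ y ≠ v) with hBs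
  set Ms : Finset V := Finset.univ.filter (fun x => G.Adj x v ∧ ¬ T.Adj x v ∧
    ∃ c, T.Adj v c ∧ T.IsAncestor r v c ∧ T.IsAncestor r c x) with hMs
  set Ac : V → Finset (V × V) := fun c => (F c).filter (fun e => ¬ e.2 = v) with hAc
  set Mc : V → Finset (V × V) := fun c => (F c).filter (fun e => e.2 = v) with hMc
  set Mx : V → Finset V := fun c => Finset.univ.filter
    (fun x => G.Adj x v ∧ ¬ T.Adj x v ∧ T.IsAncestor r c x) with hMx
  -- basic facts about children
  have hchild_not_anc_v : ∀ {c}, T.Adj v c → T.IsAncestor r v c → ¬ T.IsAncestor r c v := by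
    intro c hadj hanc h
    exact hadj.ne' (isAncestor_antisymm hT h hanc)
  -- split F v
  have e1 : (F v).card = Bp.card + A.card := by
    rw [hBp, hA]
    exact (Finset.card_filter_add_card_filter_not (fun e : V × V => e.1 = v)).symm
  -- Bp ≃ Bs
  have eB : Bp.card = Bs.card := by
    refine Finset.card_bij' (fun e _ => e.2) (fun y _ => (v, y)) ?_ ?_ ?_ ?_
    · intro e he
      rw [hBp, Finset.mem_filter, hmemF] at he
      obtain ⟨⟨h1, h2, h3, h4, h5⟩, h6⟩ := he
      rw [hBs]; simp only [Finset.mem_filter, Finset.mem_univ, true_and]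
      rw [h6] at h1 h2
      exact ⟨h1, h2, h4, h5⟩
    · intro y hy
      rw [hBs] at hy; simp only [Finset.mem_filter, Finset.mem_univ, true_and] at hy
      obtain ⟨h1, h2, h3, h4⟩ := hy
      rw [hBp, Finset.mem_filter, hmemF]
      exact ⟨⟨h1, h2, isAncestor_self hT v, h3, h4⟩, rfl⟩
    · intro e he
      rw [hBp, Finset.mem_filter] at he
      exact Prod.ext he.2.symm rfl
    · intro y hy; rfl
  -- split each F c
  have eFc : ∀ c, (F c).card = (Mc c).card + (Ac c).card := by
    intro c
    rw [hMc, hAc]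
    exact (Finset.card_filter_add_card_filter_not (fun e : V × V => e.2 = v)).symm
  -- F c's are pairwise disjoint over children
  have hFdisj : ∀ c ∈ Ch, ∀ c' ∈ Ch, c ≠ c' → Disjoint (F c) (F c') := by
    intro c hc c' hc' hne
    rw [hmemCh] at hc hc'
    rw [Finset.disjoint_left]
    intro e he he'
    rw [hmemF] at he he'
    exact hne (child_unique hT hc.1 hc.2 he.2.2.1 hc'.1 hc'.2 he'.2.2.1)
  -- A as a disjoint union
  have eA : A = Ch.biUnion Ac := by
    ext e
    rw [hA, Finset.mem_filter, hmemF, Finset.mem_biUnion]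
    constructor
    · rintro ⟨⟨h1, h2, h3, h4, h5⟩, h6⟩
      obtain ⟨c, hadj, hvc, hcx⟩ := child_exists hT h3 (fun h => h6 h.symm)
      refine ⟨c, (hmemCh c).2 ⟨hadj, hvc⟩, ?_⟩
      rw [hAc, Finset.mem_filter, hmemF]
      have h42 : T.IsAncestor r e.2 c := (anc_child_iff hT hadj hvc).2 (Or.inl h4)
      have hne2 : e.2 ≠ c := by
        rintro rfl
        exact hchild_not_anc_v hadj hvc h4
      exact ⟨⟨h1, h2, hcx, h42, hne2⟩, h5⟩
    · rintro ⟨c, hc, he⟩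
      rw [hmemCh] at hc
      rw [hAc, Finset.mem_filter, hmemF] at he
      obtain ⟨⟨h1, h2, h3, h4, h5⟩, h6⟩ := he
      have h4' : T.IsAncestor r e.2 v := by
        rcases (anc_child_iff hT hc.1 hc.2).1 h4 with h | h
        · exact h
        · exact absurd h h5
      have h1ne : ¬ e.1 = v := by
        rintro h
        rw [h] at h3
        exact hchild_not_anc_v hc.1 hc.2 h3
      exact ⟨⟨h1, h2, isAncestor_trans hT hc.2 h3, h4', h6⟩, h1ne⟩
  have eAcard : A.card = ∑ c ∈ Ch, (Ac c).card := by
    rw [eA]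
    refine Finset.card_biUnion ?_
    intro c hc c' hc' hne
    exact Finset.disjoint_filter_filter (hFdisj c hc c' hc' hne)
  -- Mc c ≃ Mx c for children
  have eMx : ∀ c ∈ Ch, (Mc c).card = (Mx c).card := by
    intro c hc
    rw [hmemCh] at hc
    refine Finset.card_bij' (fun e _ => e.1) (fun x _ => (x, v)) ?_ ?_ ?_ ?_
    · intro e he
      rw [hMc, Finset.mem_filter, hmemF] at he
      obtain ⟨⟨h1, h2, h3, h4, h5⟩, h6⟩ := he
      rw [hMx]; simp only [Finset.mem_filter, Finset.mem_univ, true_and]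
      rw [h6] at h1 h2
      exact ⟨h1, h2, h3⟩
    · intro x hx
      rw [hMx] at hx; simp only [Finset.mem_filter, Finset.mem_univ, true_and] at hx
      obtain ⟨h1, h2, h3⟩ := hx
      rw [hMc, Finset.mem_filter, hmemF]
      exact ⟨⟨h1, h2, h3, hc.2, hc.1.ne⟩, rfl⟩
    · intro e he
      rw [hMc, Finset.mem_filter] at he
      exact Prod.ext rfl he.2.symm
    · intro x hx; rfl
  -- Ms as a disjoint union
  have eMs : Ms = Ch.biUnion Mx := by
    ext x
    rw [hMs, Finset.mem_biUnion]
    simp only [Finset.mem_filter, Finset.mem_univ, true_and]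
    constructor
    · rintro ⟨h1, h2, c, hadj, hvc, hcx⟩
      refine ⟨c, (hmemCh c).2 ⟨hadj, hvc⟩, ?_⟩
      rw [hMx]; simp only [Finset.mem_filter, Finset.mem_univ, true_and]
      exact ⟨h1, h2, hcx⟩
    · rintro ⟨c, hc, hx⟩
      rw [hmemCh] at hc
      rw [hMx] at hx; simp only [Finset.mem_filter, Finset.mem_univ, true_and] at hx
      exact ⟨hx.1, hx.2.1, c, hc.1, hc.2, hx.2.2⟩
  have eMscard : Ms.card = ∑ c ∈ Ch, (Mx c).card := by
    rw [eMs]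
    refine Finset.card_biUnion ?_
    intro c hc c' hc' hne
    rw [Finset.mem_coe, hmemCh] at hc hc'
    rw [Function.onFun, Finset.disjoint_left]
    intro x hx hx'
    rw [hMx] at hx hx'
    simp only [Finset.mem_filter, Finset.mem_univ, true_and] at hx hx'
    exact hne (child_unique hT hc.1 hc.2 hx.2.2 hc'.1 hc'.2 hx'.2.2)
  -- assemble
  have e2 : ∑ c ∈ Ch, (F c).card = Ms.card + A.card := by
    rw [eAcard, eMscard, ← Finset.sum_add_distrib]
    exact Finset.sum_congr rfl (fun c hc => by rw [eFc c, eMx c hc])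
  have hMsn : (Set.ncard {x : V | G.Adj x v ∧ ¬ T.Adj x v ∧
      ∃ c : V, T.Adj v c ∧ T.IsAncestor r v c ∧ T.IsAncestor r c x}) = Ms.card := by
    rw [hMs, ncard_filter_eq]
    congr!
  have hBsn : (Set.ncard {y : V | G.Adj v y ∧ ¬ T.Adj v y ∧
      T.IsAncestor r y v ∧ y ≠ v}) = Bs.card := by
    rw [hBs, ncard_filter_eq]
    congr!
  rw [hMsn, hBsn, hbc v]
  have hsum : (∑ c ∈ Finset.univ.filter (fun c => T.Adj v c ∧ T.IsAncestor r v c),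
      (bypassCount G T r c : ℤ)) = ((∑ c ∈ Ch, (F c).card : ℕ) : ℤ) := by
    rw [Nat.cast_sum, hCh]
    exact Finset.sum_congr rfl (fun c _ => by rw [hbc c])
  rw [hsum, e2, e1, eB]
  push_cast
  ring
end
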